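/- Consider the transverse system ė = F(e,x), ẋ = G(e,x) satisfying Property TULES-NL with constants r, k, λ > 0. Assume there exist positive real numbers ρ, μ and c such that, for all x in ℝ^{n_x}, |∂F/∂e(0,x)| ≤ μ and |∂G/∂x(0,x)| ≤ ρ, and, for all (e,x) with |e| ≤ kr, |∂²F/∂e∂e(e,x)| ≤ c, |∂²F/∂x∂e(e,x)| ≤ c and |∂G/∂e(e,x)| ≤ c. Then the transversally linearized system δė = (∂F/∂e)(0,x)δ, ẋ = G̃(x) := G(0,x) is forward complete and there exist strictly positive real numbers k̃ and λ̃ such that every solution (δE(δ₀,x₀,t), X̃(x₀,t)) of the linearized system satisfies |δE(δ₀,x₀,t)| ≤ k̃ exp(−λ̃ t)|δ₀| for all (δ₀,x₀,t) in ℝ^{n_e}×ℝ^{n_x}×ℝ₊. -/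

import Mathlib

/-!
The linearized equation `δ' = A(t) δ` has coefficients bounded by `μ`, so Picard–Lindelöf yields
solutions on time intervals of a fixed length `τ`; gluing them gives solutions on `[0, ∞)`.

For the decay, fix a solution `(δ, ξ)` of the linearized system and a time `T`, and start the
nonlinear system at `(s δ(0), ξ(0))`. By TULES-NL its transverse component stays of size `O(s)`,
so Grönwall's inequality, fed by the bounds on the derivatives, shows that it stays
`O(s²)`-close to `s δ` on `[0, T]`. Dividing the TULES-NL estimate at time `T` by `s` and letting
`s → 0` gives `‖δ(T)‖ ≤ k e^{-λT} ‖δ(0)‖`: one can take `k̃ = k` and `λ̃ = λ`.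
-/

open Real Set Filter
open scoped RealInnerProductSpace Topology

/-- Euclidean state space ℝⁿ. -/
abbrev Euc (n : ℕ) := EuclideanSpace ℝ (Fin n)

open scoped NNReal

section IntegralCurves

variable {E : Type*} [NormedAddCommGroup E] [NormedSpace ℝ E] {v : ℝ → E → E}

theorem IsIntegralCurveOn.piecewise_Iic {γ₁ γ₂ : ℝ → E} {a b c : ℝ}
    (hγ₁ : IsIntegralCurveOn γ₁ v (Icc a b)) (hγ₂ : IsIntegralCurveOn γ₂ v (Icc b c))
    (hb : γ₁ b = γ₂ b) (hab : a ≤ b) (hbc : b ≤ c) :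
    IsIntegralCurveOn ((Iic b).piecewise γ₁ γ₂) v (Icc a c) := by
  set γ := (Iic b).piecewise γ₁ γ₂
  have hderiv : ∀ {s : Set ℝ} {γ' : ℝ → E}, IsClosed s → IsIntegralCurveOn γ' v s →
      EqOn γ γ' s → ∀ t, HasDerivWithinAt γ (v t (γ t)) s t := by
    intro s γ' hs hγ' hγγ' t
    by_cases ht : t ∈ s
    · rw [hγγ' ht]
      exact (hγ' t ht).congr hγγ' (hγγ' ht)
    · exact HasFDerivWithinAt.of_notMem_closure (by rwa [hs.closure_eq])
  have h₁ : EqOn γ γ₁ (Icc a b) := fun t ht => piecewise_eq_of_mem _ _ _ ht.2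
  have h₂ : EqOn γ γ₂ (Icc b c) := by
    intro t ht
    rcases ht.1.eq_or_lt with rfl | hlt
    · exact (piecewise_eq_of_mem _ _ _ (mem_Iic.2 le_rfl)).trans hb
    · exact piecewise_eq_of_notMem _ _ _ (not_le.2 hlt)
  rw [← Icc_union_Icc_eq_Icc hab hbc]
  exact fun t _ => (hderiv isClosed_Icc hγ₁ h₁ t).union (hderiv isClosed_Icc hγ₂ h₂ t)

theorem exists_isIntegralCurveOn_Ici_of_forall_Icc {τ : ℝ} (hτ : 0 < τ)
    (hloc : ∀ t₀, 0 ≤ t₀ → ∀ y₀ : E, ∃ γ : ℝ → E, γ t₀ = y₀ ∧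
      IsIntegralCurveOn γ v (Icc t₀ (t₀ + τ)))
    (y₀ : E) : ∃ γ : ℝ → E, γ 0 = y₀ ∧ IsIntegralCurveOn γ v (Ici 0) := by
  choose! loc hloc_start hloc_curve using hloc
  let Γ : ℕ → ℝ → E := fun n => Nat.rec (loc 0 y₀)
    (fun m γ => (Iic ((m + 1) * τ)).piecewise γ (loc ((m + 1) * τ) (γ ((m + 1) * τ)))) n
  have hΓ_succ : ∀ n : ℕ, Γ (n + 1) = (Iic ((n + 1) * τ)).piecewise (Γ n)
      (loc ((n + 1) * τ) (Γ n ((n + 1) * τ))) := fun _ => rfl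
  have hΓ_curve : ∀ n : ℕ, IsIntegralCurveOn (Γ n) v (Icc 0 ((n + 1) * τ)) := by
    intro n
    induction n with
    | zero => simpa [Γ] using hloc_curve 0 le_rfl y₀
    | succ n ih =>
      have hpos : (0 : ℝ) ≤ (n + 1) * τ := by positivity
      rw [hΓ_succ]
      convert ih.piecewise_Iic (hloc_curve _ hpos _) (hloc_start _ hpos _).symm hpos
        (le_add_of_nonneg_right hτ.le) using 2
      push_cast
      ring
  have hΓ_agree : ∀ n m : ℕ, n ≤ m → EqOn (Γ m) (Γ n) (Iic ((n + 1) * τ)) := by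
    intro n m hnm
    induction m, hnm using Nat.le_induction with
    | base => exact fun _ _ => rfl
    | succ m hnm ih =>
      intro t ht
      have hle : t ≤ (m + 1) * τ := ht.trans (by gcongr)
      rw [hΓ_succ, piecewise_eq_of_mem _ _ _ (mem_Iic.2 hle)]
      exact ih ht
  have hlt : ∀ t, t < (⌊t / τ⌋₊ + 1) * τ := fun t =>
    (div_lt_iff₀ hτ).1 (Nat.lt_floor_add_one _)
  refine ⟨fun t => Γ ⌊t / τ⌋₊ t, by simpa [Γ] using hloc_start 0 le_rfl y₀, fun t ht => ?_⟩
  set n := ⌊t / τ⌋₊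
  have heq : (fun t => Γ ⌊t / τ⌋₊ t) =ᶠ[𝓝 t] Γ n := by
    filter_upwards [Iio_mem_nhds (hlt t)] with s hs
    rcases le_total ⌊s / τ⌋₊ n with h | h
    · exact (hΓ_agree _ _ h (hlt s).le).symm
    · exact hΓ_agree _ _ h (mem_Iio.1 hs).le
  have hmem : Icc 0 ((n + 1) * τ) ∈ 𝓝[Ici 0] t := by
    rw [← Ici_inter_Iic]
    exact inter_mem_nhdsWithin _ (Iic_mem_nhds (hlt t))
  exact ((hΓ_curve n t ⟨ht, (hlt t).le⟩).mono_of_mem_nhdsWithin hmem).congr_of_eventuallyEq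
    (nhdsWithin_le_nhds heq) heq.eq_of_nhds

theorem exists_isIntegralCurveOn_Icc_clm [CompleteSpace E] {A : ℝ → E →L[ℝ] E} {μ : ℝ≥0}
    {t₀ τ : ℝ} (hτ : 0 ≤ τ) (hμτ : μ * τ ≤ 1 / 2) (hA : ContinuousOn A (Icc t₀ (t₀ + τ)))
    (hAμ : ∀ t ∈ Icc t₀ (t₀ + τ), ‖A t‖ ≤ μ) (y₀ : E) :
    ∃ γ : ℝ → E, γ t₀ = y₀ ∧ IsIntegralCurveOn γ (fun t y => A t y) (Icc t₀ (t₀ + τ)) := by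
  -- Picard–Lindelöf on the ball of radius `‖y₀‖` around `y₀`, where `‖A t y‖ ≤ 2 μ ‖y₀‖`.
  have hPL : IsPicardLindelof (fun t y => A t y) (tmin := t₀) (tmax := t₀ + τ)
      ⟨t₀, left_mem_Icc.2 (le_add_of_nonneg_right hτ)⟩ y₀ ‖y₀‖₊ 0 (2 * μ * ‖y₀‖₊) μ := by
    refine ⟨fun t ht => ((A t).lipschitz.weaken ?_).lipschitzOnWith,
      fun y _ => hA.clm_apply continuousOn_const, fun t ht y hy => ?_, ?_⟩
    · exact_mod_cast hAμ t ht
    · have hy' : ‖y‖ ≤ 2 * ‖y₀‖ := by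
        have := norm_le_norm_add_norm_sub' y y₀
        rw [Metric.mem_closedBall, dist_eq_norm] at hy
        push_cast at hy
        linarith
      push_cast
      calc ‖A t y‖ ≤ μ * ‖y‖ := (A t).le_of_opNorm_le (hAμ t ht) y
        _ ≤ μ * (2 * ‖y₀‖) := by gcongr
        _ = 2 * μ * ‖y₀‖ := by ring
    · push_cast
      simp only [add_sub_cancel_left, sub_self, max_eq_left hτ, sub_zero]
      nlinarith [norm_nonneg y₀]
  obtain ⟨γ, hγ₀, hγ⟩ := hPL.exists_eq_forall_mem_Icc_hasDerivWithinAt₀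
  exact ⟨γ, hγ₀, hγ⟩

theorem exists_isIntegralCurveOn_Ici_clm [CompleteSpace E] {A : ℝ → E →L[ℝ] E} {μ : ℝ≥0}
    (hA : ContinuousOn A (Ici 0)) (hAμ : ∀ t, 0 ≤ t → ‖A t‖ ≤ μ) (y₀ : E) :
    ∃ γ : ℝ → E, γ 0 = y₀ ∧ IsIntegralCurveOn γ (fun t y => A t y) (Ici 0) := by
  have hτ : 0 < (2 * (μ : ℝ) + 1)⁻¹ := by positivity
  refine exists_isIntegralCurveOn_Ici_of_forall_Icc hτ (fun t₀ ht₀ y₀ => ?_) y₀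
  have hsub : Icc t₀ (t₀ + (2 * (μ : ℝ) + 1)⁻¹) ⊆ Ici 0 := fun t ht => ht₀.trans ht.1
  refine exists_isIntegralCurveOn_Icc_clm hτ.le ?_ (hA.mono hsub) (fun t ht => hAμ t (hsub ht)) y₀
  rw [← div_eq_mul_inv, div_le_iff₀ (by positivity)]
  linarith

end IntegralCurves

section MeanValue

variable {E Y : Type*} [NormedAddCommGroup E] [NormedSpace ℝ E]
  [NormedAddCommGroup Y] [NormedSpace ℝ Y]

theorem lipschitzWith_of_hasFDerivAt_of_norm_le {f : E → Y} {f' : E → E →L[ℝ] Y} {C : ℝ≥0}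
    (hf : ∀ x, HasFDerivAt f (f' x) x) (hC : ∀ x, ‖f' x‖ ≤ C) : LipschitzWith C f :=
  lipschitzWith_of_nnnorm_fderiv_le (fun x => (hf x).differentiableAt) fun x => by
    rw [(hf x).fderiv]
    exact_mod_cast hC x

theorem norm_image_sub_image_zero_le {f : E → Y} {f' : E → E →L[ℝ] Y} {R C : ℝ}
    (hf : ∀ y, ‖y‖ ≤ R → HasFDerivAt f (f' y) y) (hC : ∀ y, ‖y‖ ≤ R → ‖f' y‖ ≤ C)
    {y : E} (hy : ‖y‖ ≤ R) : ‖f y - f 0‖ ≤ C * ‖y‖ := by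
  have hR : (0 : E) ∈ Metric.closedBall 0 R :=
    Metric.mem_closedBall_self ((norm_nonneg y).trans hy)
  simpa using (convex_closedBall (0 : E) R).norm_image_sub_le_of_norm_hasFDerivWithin_le
    (fun z hz => (hf z (mem_closedBall_zero_iff.1 hz)).hasFDerivWithinAt)
    (fun z hz => hC z (mem_closedBall_zero_iff.1 hz)) hR (mem_closedBall_zero_iff.2 hy)

theorem norm_image_sub_fderiv_zero_le {f : E → Y} {f' : E → E →L[ℝ] Y}
    {f'' : E → E →L[ℝ] E →L[ℝ] Y} {R c : ℝ} (hf0 : f 0 = 0)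
    (hf : ∀ y, ‖y‖ ≤ R → HasFDerivAt f (f' y) y) (hf' : ∀ y, ‖y‖ ≤ R → HasFDerivAt f' (f'' y) y)
    (hf'' : ∀ y, ‖y‖ ≤ R → ‖f'' y‖ ≤ c) {e : E} (he : ‖e‖ ≤ R) :
    ‖f e - f' 0 e‖ ≤ c * ‖e‖ ^ 2 := by
  have hc : 0 ≤ c := (norm_nonneg (f'' 0)).trans (hf'' 0 (by simpa using (norm_nonneg e).trans he))
  have hball : ∀ y ∈ Metric.closedBall (0 : E) ‖e‖, ‖y‖ ≤ R := fun y hy =>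
    (mem_closedBall_zero_iff.1 hy).trans he
  have h := (convex_closedBall (0 : E) ‖e‖).norm_image_sub_le_of_norm_hasFDerivWithin_le'
    (φ := f' 0) (C := c * ‖e‖) (fun y hy => (hf y (hball y hy)).hasFDerivWithinAt)
    (fun y hy => (norm_image_sub_image_zero_le hf' hf'' (hball y hy)).trans
      (by gcongr; exact mem_closedBall_zero_iff.1 hy))
    (Metric.mem_closedBall_self (norm_nonneg e)) (mem_closedBall_zero_iff.2 le_rfl)
  simpa [hf0, sq, mul_assoc] using h

end MeanValue

theorem gronwallBound_δ0 (K ε x : ℝ) : gronwallBound 0 K ε x = ε * gronwallBound 0 K 1 x := by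
  unfold gronwallBound
  split_ifs <;> ring

section Comparison

variable {E X : Type*} [NormedAddCommGroup E] [NormedSpace ℝ E]
  [NormedAddCommGroup X] [NormedSpace ℝ X]

theorem norm_sub_le_of_approx_trajectory {v : ℝ → E → E} {K : ℝ≥0} {f f' g : ℝ → E} {ε T : ℝ}
    (hv : ∀ t, LipschitzWith K (v t))
    (hf : ∀ t, 0 ≤ t → HasDerivWithinAt f (f' t) (Ici 0) t) (hg : IsIntegralCurveOn g v (Ici 0))
    (h0 : f 0 = g 0) (hT : 0 ≤ T) (hε : ∀ t ∈ Ico 0 T, ‖f' t - v t (f t)‖ ≤ ε) :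
    ‖f T - g T‖ ≤ ε * gronwallBound 0 K 1 T := by
  have hfc : ContinuousOn f (Ici 0) := fun t ht => (hf t ht).continuousWithinAt
  have h := dist_le_of_approx_trajectories_ODE (εg := 0) hv (hfc.mono Icc_subset_Ici_self)
    (fun t ht => (hf t ht.1).mono (Ici_subset_Ici.2 ht.1)) (by simpa [dist_eq_norm] using hε)
    (hg.continuousOn.mono Icc_subset_Ici_self)
    (fun t ht => (hg t ht.1).mono (Ici_subset_Ici.2 ht.1)) (by simp) (by rw [h0, dist_self])
    T ⟨hT, le_rfl⟩
  rwa [dist_eq_norm, add_zero, sub_zero, gronwallBound_δ0] at h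

theorem norm_sub_smul_le_of_linearization {F : E × X → E} {G : E × X → X}
    {A : X → E →L[ℝ] E} {ρ μ c : ℝ≥0} {e δ : ℝ → E} {x ξ : ℝ → X} {s M T : ℝ}
    (hG0 : LipschitzWith ρ fun y => G (0, y)) (hA : LipschitzWith c A) (hAμ : ∀ y, ‖A y‖ ≤ μ)
    (hGe : ∀ e x, ‖e‖ ≤ M → ‖G (e, x) - G (0, x)‖ ≤ c * ‖e‖)
    (hFe : ∀ e x, ‖e‖ ≤ M → ‖F (e, x) - A x e‖ ≤ c * ‖e‖ ^ 2)
    (he : ∀ t, 0 ≤ t → HasDerivWithinAt e (F (e t, x t)) (Ici 0) t)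
    (hx : ∀ t, 0 ≤ t → HasDerivWithinAt x (G (e t, x t)) (Ici 0) t)
    (hξ : IsIntegralCurveOn ξ (fun _ y => G (0, y)) (Ici 0))
    (hδ : IsIntegralCurveOn δ (fun t y => A (ξ t) y) (Ici 0))
    (he0 : e 0 = s • δ 0) (hx0 : x 0 = ξ 0) (heM : ∀ t, 0 ≤ t → ‖e t‖ ≤ M) (hT : 0 ≤ T) :
    ‖e T - s • δ T‖ ≤ c * M ^ 2 * (1 + c * gronwallBound 0 ρ 1 T) * gronwallBound 0 μ 1 T := by
  have hM : 0 ≤ M := (norm_nonneg _).trans (heM 0 le_rfl)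
  have hgρ : 0 ≤ gronwallBound 0 ρ 1 T :=
    (gronwallBound_x0 0 ρ 1).symm.trans_le (gronwallBound_mono le_rfl zero_le_one ρ.2 hT)
  set D := c * M * gronwallBound 0 ρ 1 T
  have hD : 0 ≤ D := by positivity
  have hxξ : ∀ t ∈ Icc 0 T, ‖x t - ξ t‖ ≤ D := fun t ht => calc
    ‖x t - ξ t‖ ≤ c * M * gronwallBound 0 ρ 1 t :=
      norm_sub_le_of_approx_trajectory (fun _ => hG0) hx hξ hx0 ht.1 fun τ hτ =>
        (hGe _ _ (heM τ hτ.1)).trans (by gcongr; exact heM τ hτ.1)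
    _ ≤ D := mul_le_mul_of_nonneg_left (gronwallBound_mono le_rfl zero_le_one ρ.2 ht.2)
      (by positivity)
  have hsδ : IsIntegralCurveOn (fun t => s • δ t) (fun t y => A (ξ t) y) (Ici 0) :=
    fun t ht => by
      have := (hδ t ht).const_smul s
      rwa [← map_smul] at this
  have hdefect : ∀ t ∈ Ico 0 T, ‖F (e t, x t) - A (ξ t) (e t)‖ ≤ c * M ^ 2 + c * D * M := by
    intro t ht
    have hsplit : F (e t, x t) - A (ξ t) (e t) =
        (F (e t, x t) - A (x t) (e t)) + (A (x t) - A (ξ t)) (e t) := by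
      rw [sub_apply]
      abel
    rw [hsplit]
    refine (norm_add_le _ _).trans (add_le_add ?_ ?_)
    · exact (hFe _ _ (heM t ht.1)).trans (by gcongr; exact heM t ht.1)
    · refine ((A (x t) - A (ξ t)).le_opNorm _).trans (mul_le_mul ?_ (heM t ht.1) (norm_nonneg _)
        (by positivity))
      exact (hA.norm_sub_le _ _).trans (by gcongr; exact hxξ t (Ico_subset_Icc_self ht))
  have h := norm_sub_le_of_approx_trajectory
    (fun t => (A (ξ t)).lipschitz.weaken (by exact_mod_cast hAμ (ξ t))) he hsδ he0 hT hdefect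
  calc ‖e T - s • δ T‖ ≤ (c * M ^ 2 + c * D * M) * gronwallBound 0 μ 1 T := h
    _ = c * M ^ 2 * (1 + c * gronwallBound 0 ρ 1 T) * gronwallBound 0 μ 1 T := by ring

theorem norm_le_of_linearization_of_exponential_stability {F : E × X → E} {G : E × X → X}
    {A : X → E →L[ℝ] E} {Efl : E → X → ℝ → E} {Xfl : E → X → ℝ → X} {r k lam : ℝ}
    {ρ μ c : ℝ≥0}
    (hinit : ∀ e x, Efl e x 0 = e ∧ Xfl e x 0 = x)
    (hflow : ∀ e x t, 0 ≤ t →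
      HasDerivWithinAt (Efl e x) (F (Efl e x t, Xfl e x t)) (Ici 0) t ∧
      HasDerivWithinAt (Xfl e x) (G (Efl e x t, Xfl e x t)) (Ici 0) t)
    (hr : 0 < r) (hk : 0 ≤ k) (hlam : 0 ≤ lam)
    (hTULES : ∀ e x t, 0 ≤ t → ‖e‖ ≤ r → ‖Efl e x t‖ ≤ k * ‖e‖ * exp (-lam * t))
    (hG0 : LipschitzWith ρ fun y => G (0, y)) (hA : LipschitzWith c A) (hAμ : ∀ y, ‖A y‖ ≤ μ)
    (hGe : ∀ e x, ‖e‖ ≤ k * r → ‖G (e, x) - G (0, x)‖ ≤ c * ‖e‖)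
    (hFe : ∀ e x, ‖e‖ ≤ k * r → ‖F (e, x) - A x e‖ ≤ c * ‖e‖ ^ 2)
    {δ : ℝ → E} {ξ : ℝ → X} (hξ : IsIntegralCurveOn ξ (fun _ y => G (0, y)) (Ici 0))
    (hδ : IsIntegralCurveOn δ (fun t y => A (ξ t) y) (Ici 0)) {T : ℝ} (hT : 0 ≤ T) :
    ‖δ T‖ ≤ k * exp (-lam * T) * ‖δ 0‖ := by
  set b := k * exp (-lam * T) * ‖δ 0‖
  set C := c * k ^ 2 * ‖δ 0‖ ^ 2 * (1 + c * gronwallBound 0 ρ 1 T) * gronwallBound 0 μ 1 T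
  have key : ∀ s, 0 < s → s * ‖δ 0‖ ≤ r → ‖δ T‖ ≤ b + s * C := by
    intro s hs hsr
    have hs0 : ‖s • δ 0‖ = s * ‖δ 0‖ := by rw [norm_smul, Real.norm_of_nonneg hs.le]
    set e := Efl (s • δ 0) (ξ 0)
    have he : ∀ t, 0 ≤ t → ‖e t‖ ≤ k * (s * ‖δ 0‖) * exp (-lam * t) := fun t ht => by
      simpa only [hs0] using hTULES (s • δ 0) (ξ 0) t ht (hs0 ▸ hsr)
    have heM : ∀ t, 0 ≤ t → ‖e t‖ ≤ k * (s * ‖δ 0‖) := fun t ht =>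
      (he t ht).trans (mul_le_of_le_one_right (by positivity) (exp_le_one_iff.2 (by nlinarith)))
    have hkr : k * (s * ‖δ 0‖) ≤ k * r := by gcongr
    have hcomp := norm_sub_smul_le_of_linearization hG0 hA hAμ
      (fun e x he' => hGe e x (he'.trans hkr)) (fun e x he' => hFe e x (he'.trans hkr))
      (fun t ht => (hflow _ _ t ht).1) (fun t ht => (hflow _ _ t ht).2) hξ hδ
      (hinit _ _).1 (hinit _ _).2 heM hT
    have h : s * ‖δ T‖ ≤ s * (b + s * C) := calc
      s * ‖δ T‖ = ‖s • δ T‖ := by rw [norm_smul, Real.norm_of_nonneg hs.le]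
      _ ≤ ‖e T‖ + ‖e T - s • δ T‖ := norm_le_norm_add_norm_sub _ _
      _ ≤ _ := add_le_add (he T hT) hcomp
      _ = s * (b + s * C) := by ring
    exact le_of_mul_le_mul_left h hs
  have hlim : Tendsto (fun s => b + s * C) (𝓝[>] 0) (𝓝 b) := by
    simpa using (Continuous.tendsto (by fun_prop : Continuous fun s => b + s * C) 0).mono_left
      nhdsWithin_le_nhds
  refine ge_of_tendsto hlim ?_
  filter_upwards [Ioo_mem_nhdsGT (by positivity : 0 < r / (‖δ 0‖ + 1))] with s hs
  have := (lt_div_iff₀ (by positivity)).1 hs.2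
  exact key s hs.1 (by nlinarith [hs.1])

end Comparison

theorem fact1_transverse_local
    {ne nx : ℕ}
    (F : Euc ne × Euc nx → Euc ne) (G : Euc ne × Euc nx → Euc nx)
    (hF0 : ∀ x, F (0, x) = 0)
    -- partial derivatives of F and G
    (dFe : Euc ne → Euc nx → Euc ne →L[ℝ] Euc ne)
    (hdFe : ∀ e x, HasFDerivAt (fun e' => F (e', x)) (dFe e x) e)
    (dGx : Euc ne → Euc nx → Euc nx →L[ℝ] Euc nx)
    (hdGx : ∀ e x, HasFDerivAt (fun x' => G (e, x')) (dGx e x) x)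
    (dGe : Euc ne → Euc nx → Euc ne →L[ℝ] Euc nx)
    (hdGe : ∀ e x, HasFDerivAt (fun e' => G (e', x)) (dGe e x) e)
    (dFee : Euc ne → Euc nx → Euc ne →L[ℝ] Euc ne →L[ℝ] Euc ne)
    (hdFee : ∀ e x, HasFDerivAt (fun e' => dFe e' x) (dFee e x) e)
    (dFxe : Euc ne → Euc nx → Euc nx →L[ℝ] Euc ne →L[ℝ] Euc ne)
    (hdFxe : ∀ e x, HasFDerivAt (fun x' => dFe e x') (dFxe e x) x)
    -- forward complete flow of the nonlinear system
    (Efl : Euc ne → Euc nx → ℝ → Euc ne) (Xfl : Euc ne → Euc nx → ℝ → Euc nx)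
    (hinit : ∀ e x, Efl e x 0 = e ∧ Xfl e x 0 = x)
    (hflow : ∀ e x t, 0 ≤ t →
      HasDerivWithinAt (Efl e x) (F (Efl e x t, Xfl e x t)) (Ici 0) t ∧
      HasDerivWithinAt (Xfl e x) (G (Efl e x t, Xfl e x t)) (Ici 0) t)
    -- Property TULES-NL
    (r k lam : ℝ) (hr : 0 < r) (hk : 0 < k) (hlam : 0 < lam)
    (hTULES : ∀ e x t, 0 ≤ t → ‖e‖ ≤ r → ‖Efl e x t‖ ≤ k * ‖e‖ * exp (-lam * t))
    -- bounds on the derivatives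
    (ρ μ c : ℝ)
    (hbnd1 : ∀ x, ‖dFe 0 x‖ ≤ μ ∧ ‖dGx 0 x‖ ≤ ρ)
    (hbnd2 : ∀ e x, ‖e‖ ≤ k * r → ‖dFee e x‖ ≤ c ∧ ‖dFxe e x‖ ≤ c ∧ ‖dGe e x‖ ≤ c) :
    -- the linearized system is forward complete ...
    (∀ (δ0 : Euc ne) (x0 : Euc nx), ∃ (δE : ℝ → Euc ne) (X : ℝ → Euc nx),
      δE 0 = δ0 ∧ X 0 = x0 ∧
      ∀ t, 0 ≤ t →
        HasDerivWithinAt δE (dFe 0 (X t) (δE t)) (Ici 0) t ∧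
        HasDerivWithinAt X (G (0, X t)) (Ici 0) t) ∧
    -- ... and every solution of it decays exponentially, uniformly
    (∃ kt > (0:ℝ), ∃ lamt > (0:ℝ),
      ∀ (δ0 : Euc ne) (x0 : Euc nx) (δE : ℝ → Euc ne) (X : ℝ → Euc nx),
        δE 0 = δ0 → X 0 = x0 →
        (∀ t, 0 ≤ t →
          HasDerivWithinAt δE (dFe 0 (X t) (δE t)) (Ici 0) t ∧
          HasDerivWithinAt X (G (0, X t)) (Ici 0) t) →
        ∀ t, 0 ≤ t → ‖δE t‖ ≤ kt * exp (-lamt * t) * ‖δ0‖) := by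
  lift ρ to ℝ≥0 using (norm_nonneg (dGx 0 0)).trans (hbnd1 0).2
  lift μ to ℝ≥0 using (norm_nonneg (dFe 0 0)).trans (hbnd1 0).1
  have h0kr : ‖(0 : Euc ne)‖ ≤ k * r := by simpa using (mul_pos hk hr).le
  lift c to ℝ≥0 using (norm_nonneg (dFee 0 0)).trans (hbnd2 0 0 h0kr).1
  have hG0 : LipschitzWith ρ fun x => G (0, x) :=
    lipschitzWith_of_hasFDerivAt_of_norm_le (hdGx 0) fun x => (hbnd1 x).2
  have hA : LipschitzWith c (dFe 0) :=
    lipschitzWith_of_hasFDerivAt_of_norm_le (hdFxe 0) fun x => (hbnd2 0 x h0kr).2.1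
  have hGe : ∀ e x, ‖e‖ ≤ k * r → ‖G (e, x) - G (0, x)‖ ≤ c * ‖e‖ := fun e x he =>
    norm_image_sub_image_zero_le (fun y _ => hdGe y x) (fun y hy => (hbnd2 y x hy).2.2) he
  have hFe : ∀ e x, ‖e‖ ≤ k * r → ‖F (e, x) - dFe 0 x e‖ ≤ c * ‖e‖ ^ 2 := fun e x he =>
    norm_image_sub_fderiv_zero_le (hF0 x) (fun y _ => hdFe y x) (fun y _ => hdFee y x)
      (fun y hy => (hbnd2 y x hy).1) he
  refine ⟨fun δ0 x0 => ?_, k, hk, lam, hlam, fun δ0 x0 δE X hδE0 _ hsol t ht => ?_⟩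
  · have hE0 : ∀ t, 0 ≤ t → Efl 0 x0 t = 0 := fun t ht =>
      norm_le_zero_iff.1 (by simpa using hTULES 0 x0 t ht (by simpa using hr.le))
    have hX : IsIntegralCurveOn (Xfl 0 x0) (fun _ x => G (0, x)) (Ici 0) := fun t ht => by
      simpa [hE0 t ht] using (hflow 0 x0 t ht).2
    obtain ⟨δE, hδE0, hδE⟩ := exists_isIntegralCurveOn_Ici_clm
      (hA.continuous.comp_continuousOn hX.continuousOn) (fun t _ => (hbnd1 _).1) δ0
    exact ⟨δE, Xfl 0 x0, hδE0, (hinit 0 x0).2, fun t ht => ⟨hδE t ht, hX t ht⟩⟩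
  · rw [← hδE0]
    exact norm_le_of_linearization_of_exponential_stability hinit hflow hr hk.le hlam.le hTULES
      hG0 hA (fun x => (hbnd1 x).1) hGe hFe (fun t ht => (hsol t ht).2)
      (fun t ht => (hsol t ht).1) ht
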